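/- The integral over ℝ² of (1-|y|²)/(1+|y|²)³ · log(1+|y|²) dy is nonzero (in fact it is strictly negative). -/

import Mathlib

/-!
In polar coordinates the integral is `2π ∫₀^∞ r f(r) dr`, where
`f(r) = (1 - r²) / (1 + r²)³ · log (1 + r²)`. In the variable `u = 1 + r²` the integrand
`r f(r)` has the explicit antiderivative `G(u) = ((u - 1) log u + u - 1/2) / (2u²)`, with
`G(1) = 1/4` and `G(u) → 0` as `u → ∞`, so the integral equals `-π/2`. Integrability at
infinity comes for free: `r f(r) ≤ 0` for `r ≥ 1`, and a nonpositive derivative of a function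
with a finite limit is integrable.
-/

open Real MeasureTheory Set Filter Topology

noncomputable def radialIntegrand (r : ℝ) : ℝ :=
  (1 - r ^ 2) / (1 + r ^ 2) ^ 3 * log (1 + r ^ 2)

noncomputable def antiderivative (u : ℝ) : ℝ :=
  ((u - 1) * log u + u - 1 / 2) / (2 * u ^ 2)

lemma hasDerivAt_antiderivative {u : ℝ} (hu : 0 < u) :
    HasDerivAt antiderivative ((2 - u) * log u / (2 * u ^ 3)) u := by
  have hnum : HasDerivAt (fun u => (u - 1) * log u + u - 1 / 2)
      (1 * log u + (u - 1) * u⁻¹ + 1) u :=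
    ((((hasDerivAt_id u).sub_const 1).mul (hasDerivAt_log hu.ne')).add
      (hasDerivAt_id u)).sub_const _
  have hden : HasDerivAt (fun u : ℝ => 2 * u ^ 2) (2 * (2 * u)) u := by
    simpa using ((hasDerivAt_id u).pow 2).const_mul 2
  refine (hnum.div hden (by positivity)).congr_deriv ?_
  field_simp
  ring

lemma hasDerivAt_antiderivative_one_add_sq (r : ℝ) :
    HasDerivAt (fun r => antiderivative (1 + r ^ 2)) (r * radialIntegrand r) r := by
  have hu : HasDerivAt (fun r : ℝ => 1 + r ^ 2) (2 * r) r := by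
    simpa using ((hasDerivAt_id r).pow 2).const_add 1
  refine ((hasDerivAt_antiderivative (by positivity)).comp r hu).congr_deriv ?_
  rw [radialIntegrand]
  field_simp
  ring

lemma tendsto_antiderivative_atTop : Tendsto antiderivative atTop (𝓝 0) := by
  have hlog : Tendsto (fun u : ℝ => log u / u) atTop (𝓝 0) :=
    isLittleO_log_id_atTop.tendsto_div_nhds_zero
  have hinv : Tendsto (fun u : ℝ => u⁻¹) atTop (𝓝 0) := tendsto_inv_atTop_zero
  have hlim := (((hlog.mul ((tendsto_const_nhds (x := (1 : ℝ))).sub hinv)).add hinv).sub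
    ((hinv.pow 2).div_const 2)).div_const 2
  norm_num at hlim
  refine hlim.congr' ((eventually_gt_atTop 0).mono fun u hu => ?_)
  rw [antiderivative]
  field_simp

lemma tendsto_antiderivative_one_add_sq_atTop :
    Tendsto (fun r : ℝ => antiderivative (1 + r ^ 2)) atTop (𝓝 0) :=
  tendsto_antiderivative_atTop.comp
    (tendsto_atTop_add_const_left _ 1 (tendsto_pow_atTop two_ne_zero))

lemma mul_radialIntegrand_nonpos {r : ℝ} (hr : 1 ≤ r) : r * radialIntegrand r ≤ 0 := by
  refine mul_nonpos_of_nonneg_of_nonpos (by linarith) (mul_nonpos_of_nonpos_of_nonneg ?_ ?_)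
  · exact div_nonpos_of_nonpos_of_nonneg (by nlinarith) (by positivity)
  · exact log_nonneg (by nlinarith)

lemma continuous_radialIntegrand : Continuous radialIntegrand := by
  unfold radialIntegrand
  fun_prop (disch := intro r; positivity)

lemma integrableOn_mul_radialIntegrand :
    IntegrableOn (fun r => r * radialIntegrand r) (Ioi 0) := by
  rw [← Ioc_union_Ioi_eq_Ioi zero_le_one]
  refine IntegrableOn.union ?_ ?_
  · exact (continuous_id.mul continuous_radialIntegrand).integrableOn_Icc.mono_set
      Ioc_subset_Icc_self
  · exact integrableOn_Ioi_deriv_of_nonpos' (fun r _ => hasDerivAt_antiderivative_one_add_sq r)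
      (fun r hr => mul_radialIntegrand_nonpos hr.out.le) tendsto_antiderivative_one_add_sq_atTop

lemma integral_mul_radialIntegrand : ∫ r in Ioi 0, r * radialIntegrand r = -1 / 4 := by
  rw [integral_Ioi_of_hasDerivAt_of_tendsto' (fun r _ => hasDerivAt_antiderivative_one_add_sq r)
    integrableOn_mul_radialIntegrand tendsto_antiderivative_one_add_sq_atTop]
  norm_num [antiderivative]

lemma integral_fun_norm_euclideanSpace_fin_two {F : Type*} [NormedAddCommGroup F]
    [NormedSpace ℝ F] (f : ℝ → F) :
    ∫ y : EuclideanSpace ℝ (Fin 2), f ‖y‖ = (2 * π) • ∫ r in Ioi 0, r • f r := by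
  rw [integral_fun_norm_addHaar volume f, finrank_euclideanSpace_fin, measureReal_def,
    EuclideanSpace.volume_ball_fin_two]
  simp [mul_smul, pi_nonneg, ofNat_smul_eq_nsmul (R := ℝ)]

theorem stmt4 :
    (∫ y : EuclideanSpace ℝ (Fin 2),
        (1 - ‖y‖ ^ 2) / (1 + ‖y‖ ^ 2) ^ 3 * Real.log (1 + ‖y‖ ^ 2)) ≠ 0 ∧
    (∫ y : EuclideanSpace ℝ (Fin 2),
        (1 - ‖y‖ ^ 2) / (1 + ‖y‖ ^ 2) ^ 3 * Real.log (1 + ‖y‖ ^ 2)) < 0 := by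
  have hvalue : ∫ y : EuclideanSpace ℝ (Fin 2), radialIntegrand ‖y‖ = -(π / 2) := by
    simp only [integral_fun_norm_euclideanSpace_fin_two, smul_eq_mul, integral_mul_radialIntegrand]
    ring
  have hneg : ∫ y : EuclideanSpace ℝ (Fin 2), radialIntegrand ‖y‖ < 0 := by
    rw [hvalue]
    linarith [pi_pos]
  exact ⟨hneg.ne, hneg⟩
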